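/- arXiv:2108.01500 — 10 statements merged into one kernel-verified Lean document; each statement's English description precedes it below -/
import Mathlib

section
/- Let α, β ∈ ℝ. For every finitely supported function u : ℕ₀ → ℝ with u(0) = 0 one has ∑_{n=1}^∞ |u(n) − u(n−1)|² n^α ≥ ∑_{n=1}^∞ w_{α,β}(n) |u(n)|², where w_{α,β}(n) := n^α [ 1 + (1 + 1/n)^α − (1 − 1/n)^β − (1 + 1/n)^{α+β} ] for n ≥ 2 and w_{α,β}(1) := 1 + 2^α − 2^{α+β}. -/
/-!
Ground state transform. Let `ρₙ ≥ 0` weight the edge `{n, n + 1}` and let `g > 0` on `{1, 2, …}`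
with `g 0 = 0`. On each edge, `(a - b)² ≥ (1 - p/q) a² + (1 - q/p) b²` with `p = g n`,
`q = g (n + 1)` (the difference is `(p a - q b)² / (p q)`). Summing over the edges and collecting
the coefficient of each `uₘ²` gives `∑ ρₙ (uₙ₊₁ - uₙ)² ≥ ∑ (L g / g)ₘ uₘ²`, where `L` is the
weighted Laplacian; `u 0 = 0` and finite support kill the boundary terms. The theorem is the case
`ρₙ = (n + 1)^α`, `gₙ = n^β`.
-/

open Finset

lemma one_sub_div_mul_sq_add_le_sub_sq {p q : ℝ} (hp : 0 < p) (hq : 0 < q) (a b : ℝ) :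
    (1 - p / q) * a ^ 2 + (1 - q / p) * b ^ 2 ≤ (a - b) ^ 2 := by
  have sub_eq : (a - b) ^ 2 - ((1 - p / q) * a ^ 2 + (1 - q / p) * b ^ 2)
      = (p * a - q * b) ^ 2 / (p * q) := by
    field_simp
    ring
  have : 0 ≤ (p * a - q * b) ^ 2 / (p * q) := by positivity
  linarith

section GroundState

variable {ρ g u : ℕ → ℝ}

/-- `(L g / g) (n + 1)`, the Hardy weight at the vertex `n + 1`. -/
noncomputable def hardyWeight (ρ g : ℕ → ℝ) (n : ℕ) : ℝ :=
  ρ n * (1 - g n / g (n + 1)) + ρ (n + 1) * (1 - g (n + 2) / g (n + 1))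

lemma ground_state_edge_le (hρ : ∀ n, 0 ≤ ρ (n + 1)) (hg : ∀ n, 0 < g (n + 1)) (hg0 : g 0 = 0)
    (hu0 : u 0 = 0) (n : ℕ) :
    ρ n * (1 - g n / g (n + 1)) * u (n + 1) ^ 2 + ρ n * (1 - g (n + 1) / g n) * u n ^ 2
      ≤ (u (n + 1) - u n) ^ 2 * ρ n := by
  cases n with
  | zero => simp [hg0, hu0, mul_comm]
  | succ k =>
    have := mul_le_mul_of_nonneg_left
      (one_sub_div_mul_sq_add_le_sub_sq (hg k) (hg (k + 1)) (u (k + 2)) (u (k + 1))) (hρ k)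
    linarith

lemma sum_hardyWeight_mul_sq_le (hρ : ∀ n, 0 ≤ ρ (n + 1)) (hg : ∀ n, 0 < g (n + 1))
    (hg0 : g 0 = 0) (hu0 : u 0 = 0) {M : ℕ} (huM : u M = 0) :
    ∑ n ∈ range M, hardyWeight ρ g n * u (n + 1) ^ 2
      ≤ ∑ n ∈ range M, (u (n + 1) - u n) ^ 2 * ρ n := by
  set f : ℕ → ℝ := fun n => ρ n * (1 - g (n + 1) / g n) * u n ^ 2
  have shift : ∑ n ∈ range M, f n = ∑ n ∈ range M, f (n + 1) := by
    have h := (sum_range_succ' f M).symm.trans (sum_range_succ f M)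
    simpa [f, hu0, huM] using h.symm
  calc ∑ n ∈ range M, hardyWeight ρ g n * u (n + 1) ^ 2
      = ∑ n ∈ range M, (ρ n * (1 - g n / g (n + 1)) * u (n + 1) ^ 2 + f n) := by
        rw [sum_add_distrib, shift, ← sum_add_distrib]
        refine sum_congr rfl fun n _ => ?_
        simp only [hardyWeight, f]
        ring
    _ ≤ ∑ n ∈ range M, (u (n + 1) - u n) ^ 2 * ρ n :=
        sum_le_sum fun n _ => ground_state_edge_le hρ hg hg0 hu0 n

theorem tsum_hardyWeight_mul_sq_le (hρ : ∀ n, 0 ≤ ρ (n + 1)) (hg : ∀ n, 0 < g (n + 1))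
    (hg0 : g 0 = 0) (hsupp : ∃ N, ∀ n ≥ N, u n = 0) (hu0 : u 0 = 0) :
    ∑' n, hardyWeight ρ g n * u (n + 1) ^ 2 ≤ ∑' n, (u (n + 1) - u n) ^ 2 * ρ n := by
  obtain ⟨N, hN⟩ := hsupp
  have hvanish : ∀ n ∉ range N, u n = 0 ∧ u (n + 1) = 0 := fun n hn => by
    simp only [mem_range, not_lt] at hn
    exact ⟨hN n hn, hN (n + 1) (by omega)⟩
  rw [tsum_eq_sum (s := range N) fun n hn => by simp [(hvanish n hn).2],
    tsum_eq_sum (s := range N) fun n hn => by simp [hvanish n hn]]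
  exact sum_hardyWeight_mul_sq_le hρ hg hg0 hu0 (hN N le_rfl)

end GroundState

lemma rpow_mul_weight_eq (α β : ℝ) {x : ℝ} (hx : 1 ≤ x) :
    x ^ α * (1 + (1 + 1 / x) ^ α - (1 - 1 / x) ^ β - (1 + 1 / x) ^ (α + β))
      = x ^ α * (1 - (x - 1) ^ β / x ^ β) + (x + 1) ^ α * (1 - (x + 1) ^ β / x ^ β) := by
  have hx0 : 0 < x := by linarith
  rw [show 1 + 1 / x = (x + 1) / x by field_simp, show 1 - 1 / x = (x - 1) / x by field_simp,
    Real.div_rpow (by linarith) hx0.le, Real.div_rpow (by linarith) hx0.le,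
    Real.div_rpow (by linarith) hx0.le, Real.rpow_add (by linarith), Real.rpow_add hx0]
  have : x ^ α ≠ 0 := (Real.rpow_pos_of_pos hx0 α).ne'
  have : x ^ β ≠ 0 := (Real.rpow_pos_of_pos hx0 β).ne'
  field_simp
  ring

/-- Theorem 2.1: two-parameter family of discrete weighted Hardy inequalities. -/
theorem discrete_weighted_hardy_two_param (α β : ℝ) (w : ℕ → ℝ)
    (hw1 : w 1 = 1 + (2 : ℝ) ^ α - (2 : ℝ) ^ (α + β))
    (hw : ∀ n : ℕ, 2 ≤ n → w n =
      (n : ℝ) ^ α * (1 + (1 + 1 / (n : ℝ)) ^ α - (1 - 1 / (n : ℝ)) ^ β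
        - (1 + 1 / (n : ℝ)) ^ (α + β)))
    (u : ℕ → ℝ) (hsupp : ∃ N : ℕ, ∀ n ≥ N, u n = 0) (h0 : u 0 = 0) :
    ∑' n : ℕ, |u (n + 1) - u n| ^ 2 * ((n : ℝ) + 1) ^ α ≥
      ∑' n : ℕ, w (n + 1) * |u (n + 1)| ^ 2 := by
  set ρ : ℕ → ℝ := fun n => ((n : ℝ) + 1) ^ α
  -- not `(n : ℝ) ^ β` itself, which is `1` at `n = 0` when `β = 0`
  set g : ℕ → ℝ := fun n => if n = 0 then 0 else (n : ℝ) ^ β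
  have hw_eq : ∀ n, w (n + 1) = hardyWeight ρ g n := by
    rintro (_ | k)
    · simp [hardyWeight, ρ, g, hw1, Real.rpow_add two_pos, one_add_one_eq_two]
      ring
    · rw [hw (k + 1 + 1) (by omega)]
      simp only [hardyWeight, ρ, g]
      push_cast
      rw [rpow_mul_weight_eq α β (by linarith)]
      ring_nf
  simp_rw [sq_abs, hw_eq]
  exact tsum_hardyWeight_mul_sq_le (fun n => by positivity)
    (fun n => by simp only [g, n.succ_ne_zero, if_false]; positivity) (by simp [g]) hsupp h0
end

section
/- Let α ∈ [0,1) ∪ [5,∞) and let C ∈ ℝ be a constant such that ∑_{n=1}^∞ |u(n) − u(n−1)|² n^α ≥ C ∑_{n=1}^∞ |u(n)|² n^{α−2} holds for every finitely supported function u : ℕ₀ → ℝ with u(0) = 0. Then C ≤ (α−1)²/4. -/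
/-!
Test the inequality on `u(n) = n^β` for `n ≤ N`, cut off linearly to `0` on `[N, 2N]`, with
`β = (1 - α)/2 + ε`, so that `u(n)² n^(α-2) = n^(2ε-1)`. The masses `∑_{n<N} n^(2ε-1)` grow like
`N^(2ε)/(2ε)`, while `|u(n+1) - u(n)|² n^α / (u(n)² n^(α-2)) → β²` because `(n+1)^β - n^β ~ β n^(β-1)`,
so by a weighted Cesàro argument the energy of the power part is `β²` times the mass up to `o(mass)`.
The cut-off costs at most `2^α N^(2ε)`, i.e. `2^α·2ε` relative to the mass. Letting `N → ∞` and
then `ε → 0` gives `C ≤ (α - 1)²/4`.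
-/

open Real Finset Filter Topology Asymptotics

theorem rpow_add_one_sub_rpow_le {q a : ℝ} (hq₀ : 0 ≤ q) (hq₁ : q ≤ 1) (ha : 0 < a) :
    (a + 1) ^ q - a ^ q ≤ q * a ^ (q - 1) := by
  have bernoulli : (1 + a⁻¹) ^ q ≤ 1 + q * a⁻¹ :=
    rpow_one_add_le_one_add_mul_self (by linarith [inv_pos.2 ha]) hq₀ hq₁
  have split : (a + 1) ^ q = a ^ q * (1 + a⁻¹) ^ q := by
    rw [← mul_rpow ha.le (by positivity), mul_add, mul_inv_cancel₀ ha.ne', mul_one]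
  rw [split, rpow_sub_one ha.ne']
  have := mul_le_mul_of_nonneg_left bernoulli (rpow_nonneg ha.le q)
  linarith [show a ^ q * (q * a⁻¹) = q * (a ^ q / a) by ring]

theorem rpow_natCast_add_one_sub_one_le_mul_sum {q : ℝ} (hq₀ : 0 ≤ q) (hq₁ : q ≤ 1) (N : ℕ) :
    ((N : ℝ) + 1) ^ q - 1 ≤ q * ∑ n ∈ range N, ((n : ℝ) + 1) ^ (q - 1) := by
  have := sum_range_sub (fun n : ℕ => ((n : ℝ) + 1) ^ q) N
  simp only [Nat.cast_add_one, Nat.cast_zero, zero_add, one_rpow] at this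
  rw [← this, mul_sum]
  gcongr with n
  exact rpow_add_one_sub_rpow_le hq₀ hq₁ (by positivity)

theorem tendsto_rpow_add_one_sub_rpow_mul (β : ℝ) :
    Tendsto (fun n : ℕ => (((n : ℝ) + 1) ^ β - (n : ℝ) ^ β) * ((n : ℝ) + 1) ^ (1 - β))
      atTop (𝓝 β) := by
  -- the slope of `x ↦ x ^ β` between `1 - 1/(n+1)` and `1`
  have hderiv : HasDerivAt (fun x : ℝ => x ^ β) β 1 := by
    simpa using hasDerivAt_rpow_const (x := 1) (p := β) (Or.inl one_ne_zero)
  have ht : Tendsto (fun n : ℕ => -((n : ℝ) + 1)⁻¹) atTop (𝓝[<] 0) := by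
    refine tendsto_nhdsWithin_iff.2 ⟨?_, Eventually.of_forall fun n => ?_⟩
    · simpa using (tendsto_one_div_add_atTop_nhds_zero_nat (𝕜 := ℝ)).neg
    · simp only [Set.mem_Iio, Left.neg_neg_iff]; positivity
  refine (hderiv.tendsto_slope_zero_left.comp ht).congr fun n => ?_
  have hn : (0 : ℝ) < n + 1 := by positivity
  have : 1 + -((n : ℝ) + 1)⁻¹ = n / (n + 1) := by field_simp; ring
  simp only [Function.comp_apply, smul_eq_mul, this, one_rpow, div_rpow (Nat.cast_nonneg n) hn.le,
    rpow_sub hn, rpow_one]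
  field_simp
  ring

theorem tendsto_sum_mul_div_sum {f b : ℕ → ℝ} {L : ℝ} (hf : Tendsto f atTop (𝓝 L))
    (hb : 0 ≤ b) (hsum : Tendsto (fun N => ∑ n ∈ range N, b n) atTop atTop) :
    Tendsto (fun N => (∑ n ∈ range N, f n * b n) / ∑ n ∈ range N, b n) atTop (𝓝 L) := by
  have hsmall : (fun n => (f n - L) * b n) =o[atTop] b := by
    simpa using ((isLittleO_one_iff ℝ).2 (tendsto_sub_nhds_zero_iff.2 hf)).mul_isBigO
      (isBigO_refl b atTop)
  have := (hsmall.sum_range hb hsum).tendsto_div_nhds_zero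
  rw [← tendsto_sub_nhds_zero_iff]
  refine this.congr' ?_
  filter_upwards [hsum.eventually_gt_atTop 0] with N hN
  simp only [sub_mul, sum_sub_distrib, ← mul_sum]
  field_simp

noncomputable def hardyTestFun (β : ℝ) (N n : ℕ) : ℝ :=
  if n ≤ N then (n : ℝ) ^ β else if n ≤ 2 * N then (N : ℝ) ^ β * (2 - n / N) else 0

namespace hardyTestFun

variable {β : ℝ} {N n : ℕ}

theorem of_le (h : n ≤ N) : hardyTestFun β N n = (n : ℝ) ^ β := if_pos h

theorem of_le_two_mul (hN : 0 < N) (h₁ : N ≤ n) (h₂ : n ≤ 2 * N) :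
    hardyTestFun β N n = (N : ℝ) ^ β * (2 - n / N) := by
  rcases h₁.eq_or_lt with rfl | h₁
  · rw [of_le le_rfl, div_self (by positivity)]; ring
  · rw [hardyTestFun, if_neg h₁.not_ge, if_pos h₂]

theorem of_two_mul_le (hN : 0 < N) (h : 2 * N ≤ n) : hardyTestFun β N n = 0 := by
  rcases h.eq_or_lt with rfl | h
  · rw [of_le_two_mul hN (by omega) le_rfl]; push_cast; field_simp; ring
  · rw [hardyTestFun, if_neg (by omega), if_neg h.not_ge]

theorem zero (hβ : β ≠ 0) : hardyTestFun β N 0 = 0 := by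
  rw [of_le N.zero_le, Nat.cast_zero, zero_rpow hβ]

theorem succ_sub_of_mem_Ico (hn : n ∈ Ico N (2 * N)) :
    hardyTestFun β N (n + 1) - hardyTestFun β N n = -((N : ℝ) ^ β / N) := by
  obtain ⟨h₁, h₂⟩ := mem_Ico.1 hn
  have hN : 0 < N := by omega
  rw [of_le_two_mul hN h₁ h₂.le, of_le_two_mul hN (by omega) h₂]
  push_cast; ring

theorem energy_tsum_le {α : ℝ} (hα : 0 ≤ α) (hN : 0 < N) :
    ∑' n : ℕ, |hardyTestFun β N (n + 1) - hardyTestFun β N n| ^ 2 * ((n : ℝ) + 1) ^ α ≤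
      ∑ n ∈ range N, ((((n : ℝ) + 1) ^ β - (n : ℝ) ^ β) * ((n : ℝ) + 1) ^ (1 - β)) ^ 2 *
          ((n : ℝ) + 1) ^ (2 * β + α - 2) + 2 ^ α * (N : ℝ) ^ (2 * β + α - 1) := by
  have hN' : (0 : ℝ) < N := by exact_mod_cast hN
  rw [tsum_eq_sum (s := range (2 * N)) fun n hn => by
      rw [mem_range, not_lt] at hn
      simp [of_two_mul_le hN hn, of_two_mul_le hN (hn.trans n.le_succ)],
    ← sum_range_add_sum_Ico _ (by omega : N ≤ 2 * N)]
  gcongr ?_ + ?_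
  · refine (sum_congr rfl fun n hn => ?_).le
    have hn1 : (0 : ℝ) < n + 1 := by positivity
    have hweight : (((n : ℝ) + 1) ^ (1 - β)) ^ 2 * ((n : ℝ) + 1) ^ (2 * β + α - 2) =
        ((n : ℝ) + 1) ^ α := by
      rw [← rpow_natCast, ← rpow_mul hn1.le, ← rpow_add hn1]
      ring_nf
    rw [of_le (mem_range.1 hn), of_le (mem_range.1 hn).le, sq_abs, mul_pow, mul_assoc, hweight]
    push_cast
    ring
  · calc ∑ n ∈ Ico N (2 * N), |hardyTestFun β N (n + 1) - hardyTestFun β N n| ^ 2 *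
            ((n : ℝ) + 1) ^ α
        ≤ ∑ n ∈ Ico N (2 * N), ((N : ℝ) ^ β / N) ^ 2 * (2 * N) ^ α := by
          gcongr with n hn
          · rw [succ_sub_of_mem_Ico hn, abs_neg, abs_of_nonneg (by positivity)]
          · have := (mem_Ico.1 hn).2
            exact_mod_cast (by omega : n + 1 ≤ 2 * N)
      _ = 2 ^ α * (N : ℝ) ^ (2 * β + α - 1) := by
          rw [sum_const, Nat.card_Ico, show 2 * N - N = N by omega, nsmul_eq_mul,
            mul_rpow zero_le_two hN'.le, div_pow, ← rpow_natCast ((N : ℝ) ^ β),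
            ← rpow_mul hN'.le, rpow_sub_one hN'.ne', rpow_add hN']
          push_cast
          field_simp

theorem sum_range_le_mass_tsum (α : ℝ) (hN : 0 < N) :
    ∑ n ∈ range N, ((n : ℝ) + 1) ^ (2 * β + α - 2) ≤
      ∑' n : ℕ, |hardyTestFun β N (n + 1)| ^ 2 * ((n : ℝ) + 1) ^ (α - 2) := by
  rw [tsum_eq_sum (s := range (2 * N)) fun n hn => by
      rw [mem_range, not_lt] at hn
      simp [of_two_mul_le hN (hn.trans n.le_succ)]]
  refine (sum_le_sum_of_subset_of_nonneg (range_subset_range.2 (by omega))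
    fun _ _ _ => by positivity).trans_eq' (sum_congr rfl fun n hn => ?_)
  have hn1 : (0 : ℝ) < n + 1 := by positivity
  rw [of_le (mem_range.1 hn), sq_abs]
  push_cast
  rw [← rpow_natCast, ← rpow_mul hn1.le, ← rpow_add hn1]
  ring_nf

end hardyTestFun

theorem le_sq_add_of_hardy {α β C : ℝ} (hα : 0 ≤ α) (hβ : β ≠ 0)
    (hq₀ : 0 < 2 * β + α - 1) (hq₁ : 2 * β + α - 1 ≤ 1)
    (hC : ∀ u : ℕ → ℝ, (∃ N : ℕ, ∀ n ≥ N, u n = 0) → u 0 = 0 →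
      ∑' n : ℕ, |u (n + 1) - u n| ^ 2 * ((n : ℝ) + 1) ^ α ≥
        C * ∑' n : ℕ, |u (n + 1)| ^ 2 * ((n : ℝ) + 1) ^ (α - 2)) :
    C ≤ β ^ 2 + 2 ^ α * (2 * β + α - 1) := by
  rcases le_or_gt C 0 with hC₀ | hC₀
  · exact hC₀.trans (by positivity)
  set q := 2 * β + α - 1
  set S : ℕ → ℝ := fun N => ∑ n ∈ range N, ((n : ℝ) + 1) ^ (q - 1)
  have hS_lower (N : ℕ) : (N : ℝ) ^ q - 1 ≤ q * S N :=
    (sub_le_sub_right (rpow_le_rpow (by positivity) (by linarith) hq₀.le) 1).trans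
      (rpow_natCast_add_one_sub_one_le_mul_sum hq₀.le hq₁ N)
  have hS : Tendsto S atTop atTop := by
    refine (tendsto_const_mul_atTop_of_pos hq₀).1 (tendsto_atTop_mono hS_lower ?_)
    exact tendsto_atTop_add_const_right _ _
      ((tendsto_rpow_atTop hq₀).comp tendsto_natCast_atTop_atTop)
  set H : ℕ → ℝ := fun N => ∑ n ∈ range N,
    ((((n : ℝ) + 1) ^ β - (n : ℝ) ^ β) * ((n : ℝ) + 1) ^ (1 - β)) ^ 2 * ((n : ℝ) + 1) ^ (q - 1)
  have hbound : ∀ᶠ N in atTop, C ≤ H N / S N + 2 ^ α * q + 2 ^ α / S N := by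
    filter_upwards [eventually_gt_atTop 0, hS.eventually_gt_atTop 0] with N hN hSN
    have hq2 : 2 * β + α - 2 = q - 1 := by ring
    have hhardy := hC (hardyTestFun β N) ⟨2 * N, fun n => hardyTestFun.of_two_mul_le hN⟩
      (hardyTestFun.zero hβ)
    have henergy := hardyTestFun.energy_tsum_le (β := β) hα hN
    have hmass := hardyTestFun.sum_range_le_mass_tsum (β := β) α hN
    rw [hq2] at henergy hmass
    have key : C * S N ≤ H N + 2 ^ α * q * S N + 2 ^ α := by
      linarith [mul_le_mul_of_nonneg_left hmass hC₀.le,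
        mul_le_mul_of_nonneg_left (hS_lower N) (by positivity : (0 : ℝ) ≤ 2 ^ α)]
    calc C ≤ (H N + 2 ^ α * q * S N + 2 ^ α) / S N := (le_div_iff₀ hSN).2 key
      _ = H N / S N + 2 ^ α * q + 2 ^ α / S N := by field_simp
  refine ge_of_tendsto ?_ hbound
  simpa using ((tendsto_sum_mul_div_sum ((tendsto_rpow_add_one_sub_rpow_mul β).pow 2)
    (fun n => by positivity) hS).add_const (2 ^ α * q)).add (tendsto_const_nhds.div_atTop hS)

/-- Sharpness of the constant in Corollary 2.3. -/
theorem discrete_weighted_hardy_power_weight_sharp (α : ℝ)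
    (hα : α ∈ Set.Ico (0 : ℝ) 1 ∪ Set.Ici (5 : ℝ)) (C : ℝ)
    (hC : ∀ u : ℕ → ℝ, (∃ N : ℕ, ∀ n ≥ N, u n = 0) → u 0 = 0 →
      ∑' n : ℕ, |u (n + 1) - u n| ^ 2 * ((n : ℝ) + 1) ^ α ≥
        C * ∑' n : ℕ, |u (n + 1)| ^ 2 * ((n : ℝ) + 1) ^ (α - 2)) :
    C ≤ (α - 1) ^ 2 / 4 := by
  simp only [Set.mem_union, Set.mem_Ico, Set.mem_Ici] at hα
  have hα₀ : 0 ≤ α := by rcases hα with ⟨h, -⟩ | h <;> linarith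
  have hε : ∀ᶠ ε in 𝓝[>] (0 : ℝ), C ≤ ((1 - α) / 2 + ε) ^ 2 + 2 ^ α * (2 * ε) := by
    filter_upwards [Ioo_mem_nhdsGT (by norm_num : (0 : ℝ) < 1 / 2)] with ε ⟨hε₀, hε₁⟩
    have hβ : (1 - α) / 2 + ε ≠ 0 := by
      rcases hα with ⟨-, h⟩ | h
      · exact (by linarith : 0 < (1 - α) / 2 + ε).ne'
      · exact (by linarith : (1 - α) / 2 + ε < 0).ne
    have := le_sq_add_of_hardy hα₀ hβ (by linarith) (by linarith) hC
    convert this using 3; ring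
  have hlim : Tendsto (fun ε => ((1 - α) / 2 + ε) ^ 2 + 2 ^ α * (2 * ε)) (𝓝[>] 0)
      (𝓝 ((α - 1) ^ 2 / 4)) := by
    refine (Continuous.tendsto' (by fun_prop) _ _ ?_).mono_left nhdsWithin_le_nhds
    ring
  exact ge_of_tendsto hlim hε
end

section
/- Let v, w : ℕ → ℝ be non-negative functions and suppose there exists φ : ℕ₀ → ℝ with φ(n) ≥ 0 for all n, φ(n) > 0 for all n ≥ 1, such that for all n ≥ 1: (Δφ(n)) v(n) − (φ(n+1) − φ(n))(v(n+1) − v(n)) ≥ w(n) φ(n), where Δφ(n) := 2φ(n) − φ(n−1) − φ(n+1) for n ≥ 1. Then for every finitely supported function u : ℕ₀ → ℝ with u(0) = 0 one has ∑_{n=1}^∞ |u(n) − u(n−1)|² v(n) ≥ ∑_{n=1}^∞ w(n) |u(n)|². -/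
/-!
Ground state substitution: write `u = φ ψ`. Along each edge one has the identity
`(φ₁ψ₁ - φ₀ψ₀)² = (φ₁ - φ₀)(φ₁ψ₁² - φ₀ψ₀²) + φ₁φ₀(ψ₁ - ψ₀)²`, whose last term is nonnegative.
Summing it against `v` and summing by parts moves the difference onto the flux
`v(n+1)(φ(n+1) - φ n)`, whose negative divergence is exactly the left side of the
super-solution inequality, hence is at least `w φ`; since `φ ψ² = u² / φ`, this yields `w u²`.
-/

open Finset

theorem tsum_eq_sum_range_of_eq_zero {M : Type*} [AddCommMonoid M] [TopologicalSpace M]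
    {f : ℕ → M} {N : ℕ} (hf : ∀ n ≥ N, f n = 0) :
    ∑' n, f n = ∑ n ∈ range N, f n :=
  tsum_eq_sum fun n hn => hf n (by simpa using hn)

theorem sum_range_mul_sub_by_parts {R : Type*} [CommRing R] (F f : ℕ → R) (N : ℕ) :
    ∑ k ∈ range N, F k * (f (k + 1) - f k) =
      ∑ k ∈ range N, (F k - F (k + 1)) * f (k + 1) + F N * f N - F 0 * f 0 := by
  induction N with
  | zero => simp
  | succ N ih =>
    rw [sum_range_succ, sum_range_succ, ih]
    ring

theorem mul_sub_mul_sq_eq (a b x y : ℝ) :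
    (a * x - b * y) ^ 2 = (a - b) * (a * x ^ 2 - b * y ^ 2) + a * b * (x - y) ^ 2 := by
  ring

theorem mul_sub_mul_sq_ge {a b : ℝ} (ha : 0 ≤ a) (hb : 0 ≤ b) (x y : ℝ) :
    (a - b) * (a * x ^ 2 - b * y ^ 2) ≤ (a * x - b * y) ^ 2 := by
  rw [mul_sub_mul_sq_eq]
  have := mul_nonneg (mul_nonneg ha hb) (sq_nonneg (x - y))
  linarith

def edgeFlux (v φ : ℕ → ℝ) (n : ℕ) : ℝ := v (n + 1) * (φ (n + 1) - φ n)

theorem edgeFlux_sub_edgeFlux_succ (v φ : ℕ → ℝ) (n : ℕ) :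
    edgeFlux v φ n - edgeFlux v φ (n + 1) =
      (2 * φ (n + 1) - φ n - φ (n + 2)) * v (n + 1)
        - (φ (n + 2) - φ (n + 1)) * (v (n + 2) - v (n + 1)) := by
  unfold edgeFlux
  ring

section GroundState

variable {v w φ ψ u : ℕ → ℝ}

theorem sum_range_edgeFlux_le (hv : ∀ n, 1 ≤ n → 0 ≤ v n) (hφ : ∀ n, 0 ≤ φ n)
    (hu : ∀ n, u n = φ n * ψ n) (N : ℕ) :
    ∑ k ∈ range N, edgeFlux v φ k * (φ (k + 1) * ψ (k + 1) ^ 2 - φ k * ψ k ^ 2) ≤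
      ∑ k ∈ range N, (u (k + 1) - u k) ^ 2 * v (k + 1) := by
  refine sum_le_sum fun k _ => ?_
  rw [edgeFlux, hu, hu, mul_assoc, mul_comm _ (v _)]
  exact mul_le_mul_of_nonneg_left (mul_sub_mul_sq_ge (hφ _) (hφ _) _ _) (hv _ k.succ_pos)

theorem sum_range_mul_sq_le_edgeFlux
    (hsuper : ∀ n, w (n + 1) * φ (n + 1) ≤ edgeFlux v φ n - edgeFlux v φ (n + 1))
    (hφ : ∀ n, 0 ≤ φ n) (hu : ∀ n, u n = φ n * ψ n) (h0 : u 0 = 0) {N : ℕ} (hN : u N = 0) :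
    ∑ k ∈ range N, w (k + 1) * u (k + 1) ^ 2 ≤
      ∑ k ∈ range N, edgeFlux v φ k * (φ (k + 1) * ψ (k + 1) ^ 2 - φ k * ψ k ^ 2) := by
  have hvanish : ∀ n, u n = 0 → φ n * ψ n ^ 2 = 0 := fun n hn => by
    rw [sq, ← mul_assoc, ← hu, hn, zero_mul]
  rw [sum_range_mul_sub_by_parts _ (fun k => φ k * ψ k ^ 2), hvanish 0 h0, hvanish N hN,
    mul_zero, mul_zero, add_zero, sub_zero]
  refine sum_le_sum fun k _ => ?_
  calc w (k + 1) * u (k + 1) ^ 2 = w (k + 1) * φ (k + 1) * (φ (k + 1) * ψ (k + 1) ^ 2) := by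
        rw [hu]; ring
    _ ≤ _ := mul_le_mul_of_nonneg_right (hsuper k) (mul_nonneg (hφ _) (sq_nonneg _))

end GroundState

theorem discrete_supersolution_method_general (v w : ℕ → ℝ)
    (hv : ∀ n : ℕ, 1 ≤ n → 0 ≤ v n)
    (φ : ℕ → ℝ) (hφ0 : ∀ n : ℕ, 0 ≤ φ n) (hφpos : ∀ n : ℕ, 1 ≤ n → 0 < φ n)
    (hsuper : ∀ n : ℕ, 1 ≤ n →
      (2 * φ n - φ (n - 1) - φ (n + 1)) * v n
        - (φ (n + 1) - φ n) * (v (n + 1) - v n) ≥ w n * φ n)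
    (u : ℕ → ℝ) (hsupp : ∃ N : ℕ, ∀ n ≥ N, u n = 0) (h0 : u 0 = 0) :
    ∑' n : ℕ, |u (n + 1) - u n| ^ 2 * v (n + 1) ≥
      ∑' n : ℕ, w (n + 1) * |u (n + 1)| ^ 2 := by
  obtain ⟨N, hN⟩ := hsupp
  have hu : ∀ n, u n = φ n * (u n / φ n) := fun n => by
    rcases n.eq_zero_or_pos with rfl | hn
    · simp [h0]
    · exact (mul_div_cancel₀ _ (hφpos n hn).ne').symm
  have hflux : ∀ n, w (n + 1) * φ (n + 1) ≤ edgeFlux v φ n - edgeFlux v φ (n + 1) := fun n => by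
    simpa [edgeFlux_sub_edgeFlux_succ, add_assoc] using hsuper (n + 1) n.succ_pos
  simp only [sq_abs]
  rw [tsum_eq_sum_range_of_eq_zero (N := N) fun n hn => by simp [hN n hn, hN (n + 1) (by omega)],
    tsum_eq_sum_range_of_eq_zero (N := N) fun n hn => by simp [hN (n + 1) (by omega)]]
  exact (sum_range_mul_sq_le_edgeFlux hflux hφ0 hu h0 (hN N le_rfl)).trans
    (sum_range_edgeFlux_le hv hφ0 hu N)

/-- Lemma 3.1: the discrete super-solution method. Here `Δφ(n) = 2φ(n) − φ(n−1) − φ(n+1)`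
for `n ≥ 1` is the combinatorial Laplacian. -/
theorem discrete_supersolution_method (v w : ℕ → ℝ)
    (hv : ∀ n : ℕ, 1 ≤ n → 0 ≤ v n) (hw : ∀ n : ℕ, 1 ≤ n → 0 ≤ w n)
    (φ : ℕ → ℝ) (hφ0 : ∀ n : ℕ, 0 ≤ φ n) (hφpos : ∀ n : ℕ, 1 ≤ n → 0 < φ n)
    (hsuper : ∀ n : ℕ, 1 ≤ n →
      (2 * φ n - φ (n - 1) - φ (n + 1)) * v n
        - (φ (n + 1) - φ n) * (v (n + 1) - v n) ≥ w n * φ n)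
    (u : ℕ → ℝ) (hsupp : ∃ N : ℕ, ∀ n ≥ N, u n = 0) (h0 : u 0 = 0) :
    ∑' n : ℕ, |u (n + 1) - u n| ^ 2 * v (n + 1) ≥
      ∑' n : ℕ, w (n + 1) * |u (n + 1)| ^ 2 :=
  discrete_supersolution_method_general v w hv φ hφ0 hφpos hsuper u hsupp h0
end

section
/- Let α ∈ [1/3, 1) ∪ {0} and let k ≥ 3 be an integer. Then b_k(α) := binom(α, k) − (−1)^k binom((1−α)/2, k) − binom((1+α)/2, k) ≥ 0. -/
noncomputable def genBinom (γ : ℝ) (k : ℕ) : ℝ :=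
  (∏ i ∈ Finset.range k, (γ - i)) / (Nat.factorial k)

noncomputable def tailProd (x : ℝ) (m : ℕ) : ℝ := ∏ i ∈ Finset.range m, ((i : ℝ) + 2 - x)

lemma tailProd_nonneg (x : ℝ) (hx : x ≤ 1) (m : ℕ) : 0 ≤ tailProd x m := by
  apply Finset.prod_nonneg
  intro i _
  have : (0:ℝ) ≤ i := Nat.cast_nonneg i
  linarith

lemma tailProd_mono (x y : ℝ) (hxy : x ≤ y) (hy : y ≤ 1) (m : ℕ) :
    tailProd y m ≤ tailProd x m := by
  apply Finset.prod_le_prod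
  · intro i _
    have : (0:ℝ) ≤ i := Nat.cast_nonneg i
    linarith
  · intro i _
    linarith

lemma tailProd_add (x : ℝ) (a b : ℕ) :
    tailProd x (a + b) = tailProd x a * ∏ i ∈ Finset.range b, ((a : ℝ) + i + 2 - x) := by
  unfold tailProd
  rw [Finset.prod_range_add]
  congr 1
  apply Finset.prod_congr rfl
  intro i _
  push_cast
  ring

lemma genBinom_eq (x : ℝ) (m : ℕ) :
    genBinom x (m + 3) =
      ((-1 : ℝ)^m * (x * (1 - x) * tailProd x (m+1))) / (Nat.factorial (m+3)) := by
  unfold genBinom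
  congr 1
  have h1 : ∏ i ∈ Finset.range (m + 3), (x - (i:ℝ))
      = (-1:ℝ)^(m+2) * (x * ∏ i ∈ Finset.range (m+2), ((i:ℝ) + 1 - x)) := by
    rw [Finset.prod_range_succ']
    push_cast
    rw [sub_zero]
    have h : ∀ i ∈ Finset.range (m+2), (x - ((i:ℝ)+1)) = (-1) * ((i:ℝ)+1 - x) := by
      intro i _; ring
    rw [Finset.prod_congr rfl h, Finset.prod_mul_distrib, Finset.prod_const,
      Finset.card_range]
    ring
  have h2 : ∏ i ∈ Finset.range (m+2), ((i:ℝ) + 1 - x)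
      = (1 - x) * tailProd x (m+1) := by
    rw [Finset.prod_range_succ']
    unfold tailProd
    rw [mul_comm]
    congr 1
    · norm_num
    · apply Finset.prod_congr rfl; intro i _; push_cast; ring
  rw [h1, h2]
  have : (-1:ℝ)^(m+2) = (-1)^m := by rw [pow_add]; norm_num
  rw [this]; ring

set_option maxHeartbeats 2000000 in
/-- Lemma 4.1: non-negativity of the coefficients `b_k(α)` for `α ∈ [1/3,1) ∪ {0}`. -/
theorem bCoef_nonneg (α : ℝ) (hα : α ∈ Set.Ico (1 / 3 : ℝ) 1 ∪ {0})
    (k : ℕ) (hk : 3 ≤ k) :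
    genBinom α k - (-1) ^ k * genBinom ((1 - α) / 2) k
      - genBinom ((1 + α) / 2) k ≥ 0 := by
  have hα0 : 0 ≤ α ∧ α < 1 := by
    rcases hα with h | h
    · exact ⟨by linarith [h.1], h.2⟩
    · simp only [Set.mem_singleton_iff] at h
      subst h; norm_num
  obtain ⟨hα1, hα2⟩ := hα0
  obtain ⟨m, rfl⟩ : ∃ m, k = m + 3 := ⟨k - 3, by omega⟩
  set β := (1 - α) / 2 with hβ
  set γ := (1 + α) / 2 with hγ
  have hβ1 : 1 - β = γ := by rw [hβ, hγ]; ring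
  have hγ1 : 1 - γ = β := by rw [hβ, hγ]; ring
  have hβpos : 0 < β := by rw [hβ]; linarith
  have hγpos : 0 < γ := by rw [hγ]; linarith
  have hβγ : β ≤ γ := by rw [hβ, hγ]; linarith
  have hγ2 : γ < 1 := by rw [hγ]; linarith
  have hβ2 : β < 1 := lt_of_le_of_lt hβγ hγ2
  rw [genBinom_eq, genBinom_eq, genBinom_eq, ge_iff_le]
  set A := α * (1 - α) * tailProd α (m+1) with hA
  set B := β * (1 - β) * tailProd β (m+1) with hB
  set C := γ * (1 - γ) * tailProd γ (m+1) with hC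
  have hp3 : (-1:ℝ)^(m+3) = -(-1:ℝ)^m := by rw [pow_add]; norm_num
  have hsq : (-1:ℝ)^m * (-1:ℝ)^m = 1 := by
    rw [← pow_add]
    exact Even.neg_one_pow ⟨m, by ring⟩
  have key : 0 ≤ (-1:ℝ)^m * (A - C) + B := by
    rcases Nat.even_or_odd m with he | ho
    · rw [he.neg_one_pow, one_mul]
      have h1 : 0 ≤ A := by
        rw [hA]
        have ht := tailProd_nonneg α (le_of_lt hα2) (m+1)
        have : (0:ℝ) ≤ α * (1 - α) := by nlinarith
        exact mul_nonneg this ht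
      have h2 : C ≤ B := by
        rw [hB, hC, hγ1, hβ1]
        have ht := tailProd_mono β γ hβγ (le_of_lt hγ2) (m+1)
        have hbg : (0:ℝ) ≤ γ * β := by positivity
        calc γ * β * tailProd γ (m+1) ≤ γ * β * tailProd β (m+1) :=
              mul_le_mul_of_nonneg_left ht hbg
          _ = β * γ * tailProd β (m+1) := by ring
      linarith
    · rw [ho.neg_one_pow]
      rcases hα with ⟨h13, _⟩ | h0
      swap
      · simp only [Set.mem_singleton_iff] at h0
        have hA0 : A = 0 := by rw [hA, h0]; ring
        have hB0 : 0 ≤ B := by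
          rw [hB, hβ1]
          have ht := tailProd_nonneg β (le_of_lt hβ2) (m+1)
          positivity
        have hC0 : 0 ≤ C := by
          rw [hC, hγ1]
          have ht := tailProd_nonneg γ (le_of_lt hγ2) (m+1)
          positivity
        linarith
      · have hβα : β ≤ α := by rw [hβ]; linarith
        have hC0 : 0 ≤ C := by
          rw [hC, hγ1]
          have ht := tailProd_nonneg γ (le_of_lt hγ2) (m+1)
          positivity
        have hBC : A ≤ B + C := by
          have hm : m = 1 ∨ m = 3 ∨ 5 ≤ m := by
            obtain ⟨j, hj⟩ := ho; omega
          rcases hm with rfl | rfl | h5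
          · rw [hA, hB, hC, hβ1, hγ1]
            simp only [tailProd, Finset.prod_range_succ, Finset.prod_range_zero,
              Nat.cast_zero, Nat.cast_one, one_mul]
            rw [hβ, hγ]
            nlinarith [sq_nonneg (α-1/3), sq_nonneg (α-1), sq_nonneg α,
              mul_nonneg (sub_nonneg.2 h13) (le_of_lt (sub_pos.2 hα2))]
          · rw [hA, hB, hC, hβ1, hγ1]
            simp only [tailProd, Finset.prod_range_succ, Finset.prod_range_zero,
              Nat.cast_zero, Nat.cast_one, Nat.cast_ofNat, one_mul]
            rw [hβ, hγ]
            push_cast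
            nlinarith [sq_nonneg (α-1/3), sq_nonneg (α-1), sq_nonneg α,
              mul_nonneg (sub_nonneg.2 h13) (le_of_lt (sub_pos.2 hα2)),
              sq_nonneg (α*α-α), sq_nonneg (α*α)]
          · -- m ≥ 5 : split tail product at 6
            obtain ⟨r, rfl⟩ : ∃ r, m = r + 5 := ⟨m - 5, by omega⟩
            have h61 : r + 5 + 1 = 6 + r := by omega
            rw [hA, hB, hβ1, h61, tailProd_add, tailProd_add]
            set T := ∏ i ∈ Finset.range r, ((6:ℕ) + (i:ℝ) + 2 - α) with hT
            set S := ∏ i ∈ Finset.range r, ((6:ℕ) + (i:ℝ) + 2 - β) with hS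
            have hT0 : 0 ≤ T := by
              apply Finset.prod_nonneg
              intro i _
              have : (0:ℝ) ≤ i := Nat.cast_nonneg i
              push_cast
              linarith
            have hTS : T ≤ S := by
              apply Finset.prod_le_prod
              · intro i _
                have : (0:ℝ) ≤ i := Nat.cast_nonneg i
                push_cast
                linarith
              · intro i _
                push_cast
                linarith
            have hkey : α * (1 - α) * tailProd α 6 ≤ β * γ * tailProd β 6 := by
              simp only [tailProd, Finset.prod_range_succ, Finset.prod_range_zero,
                one_mul]
              rw [hβ, hγ]
              push_cast
              nlinarith [sq_nonneg (α-1/3), sq_nonneg (α-1), sq_nonneg α,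
                mul_nonneg (sub_nonneg.2 h13) (le_of_lt (sub_pos.2 hα2)),
                sq_nonneg (α*α-α), sq_nonneg (α*α), sq_nonneg (α*α*α),
                mul_nonneg (mul_nonneg (sub_nonneg.2 h13) (le_of_lt (sub_pos.2 hα2)))
                  (le_of_lt (sub_pos.2 hα2))]
            have htβ6 : 0 ≤ tailProd β 6 := tailProd_nonneg β (le_of_lt hβ2) 6
            have hbg : (0:ℝ) ≤ β * γ := by positivity
            calc α * (1 - α) * (tailProd α 6 * T)
                = α * (1 - α) * tailProd α 6 * T := by ring
              _ ≤ β * γ * tailProd β 6 * T := mul_le_mul_of_nonneg_right hkey hT0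
              _ ≤ β * γ * tailProd β 6 * S := by
                  apply mul_le_mul_of_nonneg_left hTS
                  positivity
              _ = β * γ * (tailProd β 6 * S) := by ring
              _ ≤ β * γ * (tailProd β 6 * S) + C := le_add_of_nonneg_right hC0
        linarith
  calc (0:ℝ) ≤ ((-1:ℝ)^m * (A - C) + B) / (Nat.factorial (m+3)) :=
        div_nonneg key (by positivity)
    _ = (-1:ℝ)^m * (α * (1 - α) * tailProd α (m+1)) / (Nat.factorial (m+3))
        - (-1:ℝ)^(m+3) * ((-1:ℝ)^m * (β * (1 - β) * tailProd β (m+1)) / (Nat.factorial (m+3)))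
        - (-1:ℝ)^m * (γ * (1 - γ) * tailProd γ (m+1)) / (Nat.factorial (m+3)) := by
        rw [← hA, ← hB, ← hC, hp3]
        generalize hgen : ((-1:ℝ)^m) = e at hsq ⊢
        linear_combination (-(B / (Nat.factorial (m+3) : ℝ))) * hsq
end

section
/- Let α ∈ [0, 1/3]. Then for all x ∈ (0, 1): 1 + (1+x)^α − (1−x)^{(1−α)/2} − (1+x)^{(1+α)/2} ≥ ((α−1)²/4) x². -/
/-!
With `β = (1 - α) / 2`, the function `F(t) = g(t) - (α - 1)² t² / 4` satisfies `F(0) = 0` and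
`F'(0) = α + 2β - 1 = 0`, so it suffices that `F'' ≥ 0` on `[0, 1)`. In `g''` the terms
`β(1 - β)(1 - t)^(β - 2)` and `β(1 - β)(1 + t)^(-β - 1)` are bounded below, via
`(1 - t)^(β - 2) ≥ (1 - t)^(-β - 1)` and AM-GM with `(1 - t²)^(-β - 1) ≥ 1`, by `2β(1 - β)`;
the term `α(α - 1)(1 + t)^(α - 2)` is at least `-α(1 - α)`; and
`2β(1 - β) - α(1 - α) = (α - 1)² / 2`.
-/

open Set

lemma monotoneOn_Icc_of_hasDerivAt_nonneg {f f' : ℝ → ℝ} {a b : ℝ}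
    (hf : ∀ t ∈ Icc a b, HasDerivAt f (f' t) t) (hf' : ∀ t ∈ Ioo a b, 0 ≤ f' t) :
    MonotoneOn f (Icc a b) := by
  refine monotoneOn_of_hasDerivWithinAt_nonneg (f' := f') (convex_Icc a b)
    (fun t ht ↦ (hf t ht).continuousAt.continuousWithinAt) (fun t ht ↦ ?_) ?_
  · rw [interior_Icc] at ht ⊢
    exact (hf t (Ioo_subset_Icc_self ht)).hasDerivWithinAt
  · simpa only [interior_Icc] using hf'

theorem quadratic_lower_bound_of_le_deriv2 {f f' f'' : ℝ → ℝ} {a b m : ℝ} (hab : a ≤ b)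
    (hf : ∀ t ∈ Icc a b, HasDerivAt f (f' t) t)
    (hf' : ∀ t ∈ Icc a b, HasDerivAt f' (f'' t) t) (hm : ∀ t ∈ Ioo a b, m ≤ f'' t) :
    f a + f' a * (b - a) + m / 2 * (b - a) ^ 2 ≤ f b := by
  have ha : a ∈ Icc a b := left_mem_Icc.2 hab
  have hb : b ∈ Icc a b := right_mem_Icc.2 hab
  have hf'_ge : ∀ t ∈ Icc a b, f' a + m * (t - a) ≤ f' t := by
    have hmono := monotoneOn_Icc_of_hasDerivAt_nonneg (f := fun t ↦ f' t - m * t)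
      (fun t ht ↦ (hf' t ht).sub ((hasDerivAt_id t).const_mul m))
      (fun t ht ↦ by simpa using hm t ht)
    intro t ht
    have := hmono ha ht ht.1
    simp only at this
    linarith
  have hmono := monotoneOn_Icc_of_hasDerivAt_nonneg
    (f := fun t ↦ f t - f' a * t - m / 2 * (t - a) ^ 2)
    (fun t ht ↦ ((hf t ht).sub ((hasDerivAt_id t).const_mul (f' a))).sub
      (((hasDerivAt_id t).sub_const a).pow 2 |>.const_mul (m / 2)))
    (fun t ht ↦ by
      have := hf'_ge t (Ioo_subset_Icc_self ht)
      simp only [id, Nat.cast_ofNat]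
      nlinarith)
  have := hmono ha hb hab
  simp only [sub_self] at this
  nlinarith

lemma hasDerivAt_one_add_rpow (p : ℝ) {t : ℝ} (ht : 0 < 1 + t) :
    HasDerivAt (fun s ↦ (1 + s) ^ p) (p * (1 + t) ^ (p - 1)) t := by
  simpa using ((hasDerivAt_id t).const_add 1).rpow_const (p := p) (Or.inl ht.ne')

lemma hasDerivAt_one_sub_rpow (p : ℝ) {t : ℝ} (ht : 0 < 1 - t) :
    HasDerivAt (fun s ↦ (1 - s) ^ p) (-(p * (1 - t) ^ (p - 1))) t := by
  simpa using ((hasDerivAt_id t).const_sub 1).rpow_const (p := p) (Or.inl ht.ne')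

/-- The paper's `w_{α,β}(n)` at `t = 1 / n`. -/
noncomputable def weight (α β t : ℝ) : ℝ :=
  1 + (1 + t) ^ α - (1 - t) ^ β - (1 + t) ^ (1 - β)

noncomputable def weightDeriv (α β t : ℝ) : ℝ :=
  α * (1 + t) ^ (α - 1) + β * (1 - t) ^ (β - 1) - (1 - β) * (1 + t) ^ (-β)

noncomputable def weightDeriv2 (α β t : ℝ) : ℝ :=
  α * (α - 1) * (1 + t) ^ (α - 2) - β * (β - 1) * (1 - t) ^ (β - 2)
    + β * (1 - β) * (1 + t) ^ (-β - 1)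

section

variable {α β t : ℝ}

lemma hasDerivAt_weight (h₁ : 0 < 1 + t) (h₂ : 0 < 1 - t) :
    HasDerivAt (weight α β) (weightDeriv α β t) t := by
  have := (((hasDerivAt_one_add_rpow α h₁).const_add 1).sub
    (hasDerivAt_one_sub_rpow β h₂)).sub (hasDerivAt_one_add_rpow (1 - β) h₁)
  refine this.congr_deriv ?_
  rw [weightDeriv, show 1 - β - 1 = -β by ring]
  ring

lemma hasDerivAt_weightDeriv (h₁ : 0 < 1 + t) (h₂ : 0 < 1 - t) :
    HasDerivAt (weightDeriv α β) (weightDeriv2 α β t) t := by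
  have := (((hasDerivAt_one_add_rpow (α - 1) h₁).const_mul α).add
    ((hasDerivAt_one_sub_rpow (β - 1) h₂).const_mul β)).sub
    ((hasDerivAt_one_add_rpow (-β) h₁).const_mul (1 - β))
  refine this.congr_deriv ?_
  rw [weightDeriv2, show α - 1 - 1 = α - 2 by ring, show β - 1 - 1 = β - 2 by ring]
  ring

lemma weight_zero : weight α β 0 = 0 := by
  simp [weight]

lemma weightDeriv_zero : weightDeriv α ((1 - α) / 2) 0 = 0 := by
  simp only [weightDeriv, add_zero, sub_zero, Real.one_rpow]
  ring

lemma two_le_one_sub_rpow_add_one_add_rpow (hβ : β ∈ Icc (-1) (1 / 2)) (h₀ : 0 ≤ t)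
    (h₁ : t < 1) :
    2 ≤ (1 - t) ^ (β - 2) + (1 + t) ^ (-β - 1) := by
  have hpos : 0 < 1 - t := by linarith
  have hle : (1 - t) ^ (-β - 1) ≤ (1 - t) ^ (β - 2) :=
    Real.rpow_le_rpow_of_exponent_ge hpos (by linarith) (by linarith [hβ.2])
  have hprod : 1 ≤ (1 - t) ^ (-β - 1) * (1 + t) ^ (-β - 1) := by
    rw [← Real.mul_rpow hpos.le (by linarith)]
    exact Real.one_le_rpow_of_pos_of_le_one_of_nonpos (by nlinarith) (by nlinarith)
      (by linarith [hβ.1])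
  nlinarith [sq_nonneg ((1 - t) ^ (-β - 1) - (1 + t) ^ (-β - 1)),
    Real.rpow_pos_of_pos hpos (-β - 1), Real.rpow_pos_of_pos (by linarith : 0 < 1 + t) (-β - 1)]

lemma le_weightDeriv2 (hα₀ : 0 ≤ α) (hα₁ : α ≤ 1) (h₀ : 0 ≤ t) (h₁ : t < 1) :
    (α - 1) ^ 2 / 2 ≤ weightDeriv2 α ((1 - α) / 2) t := by
  set β := (1 - α) / 2 with hβ
  have hsum := two_le_one_sub_rpow_add_one_add_rpow (β := β) ⟨by linarith, by linarith⟩ h₀ h₁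
  have hα : (1 + t) ^ (α - 2) ≤ 1 :=
    Real.rpow_le_one_of_one_le_of_nonpos (by linarith) (by linarith)
  have hαα : 0 ≤ α * (1 - α) := by nlinarith
  have hββ : 0 ≤ β * (1 - β) := by nlinarith
  have hid : (α - 1) ^ 2 / 2 = 2 * (β * (1 - β)) - α * (1 - α) := by rw [hβ]; ring
  rw [weightDeriv2, hid]
  nlinarith [mul_le_mul_of_nonneg_left hsum hββ, mul_le_mul_of_nonneg_left hα hαα]

end

/-- Lemma 4.2: `g(x) ≥ ((α−1)²/4) x²` for `α ∈ [0, 1/3]` and `x ∈ (0,1)`. -/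
theorem g_lower_bound_small_alpha (α : ℝ) (hα : α ∈ Set.Icc (0 : ℝ) (1 / 3))
    (x : ℝ) (hx : x ∈ Set.Ioo (0 : ℝ) 1) :
    1 + (1 + x) ^ α - (1 - x) ^ ((1 - α) / 2) - (1 + x) ^ ((1 + α) / 2) ≥
      (α - 1) ^ 2 / 4 * x ^ 2 := by
  have hIcc : ∀ t ∈ Icc 0 x, 0 < 1 + t ∧ 0 < 1 - t := fun t ht ↦
    ⟨by linarith [ht.1], by linarith [ht.2, hx.2]⟩
  have h := quadratic_lower_bound_of_le_deriv2 (f := weight α ((1 - α) / 2))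
    (m := (α - 1) ^ 2 / 2) hx.1.le
    (fun t ht ↦ hasDerivAt_weight (hIcc t ht).1 (hIcc t ht).2)
    (fun t ht ↦ hasDerivAt_weightDeriv (hIcc t ht).1 (hIcc t ht).2)
    (fun t ht ↦ le_weightDeriv2 hα.1 (by linarith [hα.2]) ht.1.le (by linarith [ht.2, hx.2]))
  rw [weight_zero, weightDeriv_zero, weight, show 1 - (1 - α) / 2 = (1 + α) / 2 by ring] at h
  linarith
end

section
/- Let α ∈ [0,1) ∪ [5,∞). Then 1 + 2^α − 2^{(1+α)/2} ≥ (α−1)²/4. -/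
/-- Lemma 4.7: `w_{α,(1−α)/2}(1) = 1 + 2^α − 2^{(1+α)/2} ≥ (α−1)²/4`
for `α ∈ [0,1) ∪ [5,∞)`. -/
theorem weight_at_one_lower_bound (α : ℝ)
    (hα : α ∈ Set.Ico (0 : ℝ) 1 ∪ Set.Ici (5 : ℝ)) :
    1 + (2 : ℝ) ^ α - (2 : ℝ) ^ ((1 + α) / 2) ≥ (α - 1) ^ 2 / 4 := by
  set t : ℝ := (2 : ℝ) ^ ((1 + α) / 2) with ht
  have ht2 : t ^ 2 = 2 * (2 : ℝ) ^ α := by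
    rw [ht, ← Real.rpow_natCast ((2:ℝ) ^ ((1 + α) / 2)) 2,
      ← Real.rpow_mul (by norm_num : (0:ℝ) ≤ 2)]
    push_cast
    rw [show (1 + α) / 2 * 2 = 1 + α by ring, Real.rpow_add (by norm_num : (0:ℝ) < 2),
      Real.rpow_one]
  rcases hα with ⟨h0, h1⟩ | h5
  · -- α ∈ [0,1): then (α−1)² ≤ 1 and LHS ≥ 1/2
    nlinarith [sq_nonneg (t - 1), sq_nonneg (α - 1)]
  · -- α ≥ 5: show t ≥ α
    rw [Set.mem_Ici] at h5
    have hln : Real.log 2 ≥ 0.6931 := by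
      have := Real.log_two_gt_d9
      linarith
    have hexp : t ≥ 8 * (1 + ((1 + α) / 2 - 3) * Real.log 2) := by
      have h8 : (8 : ℝ) = (2:ℝ) ^ (3:ℝ) := by
        rw [show (3:ℝ) = ((3:ℕ):ℝ) by norm_num, Real.rpow_natCast]; norm_num
      have : t = (2:ℝ) ^ (3:ℝ) * (2:ℝ) ^ ((1 + α) / 2 - 3) := by
        rw [ht, ← Real.rpow_add (by norm_num : (0:ℝ) < 2)]; ring_nf
      rw [this, ← h8]
      have hge : (2:ℝ) ^ ((1 + α) / 2 - 3) ≥ 1 + ((1 + α) / 2 - 3) * Real.log 2 := by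
        rw [Real.rpow_def_of_pos (by norm_num : (0:ℝ) < 2), mul_comm]
        have := Real.add_one_le_exp (((1 + α) / 2 - 3) * Real.log 2)
        nlinarith [this]
      nlinarith
    have htα : t ≥ α := by nlinarith [mul_nonneg (by linarith : (0:ℝ) ≤ α - 5) (by linarith : (0:ℝ) ≤ Real.log 2 - 0.6931)]
    nlinarith [mul_nonneg (by linarith : (0:ℝ) ≤ t - α) (by linarith : (0:ℝ) ≤ t + α - 2), sq_nonneg (α - 1)]
end

section
/- Let α ∈ (1, 4). Then there exists ε > 0 (depending on α) such that for all x ∈ (1/2 − ε, 1/2): 1 + (1+x)^α − (1−x)^{(1−α)/2} − (1+x)^{(1+α)/2} < ((α−1)²/4) x². -/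
open Real

private lemma exp_upper {x : ℝ} (h1 : 0 ≤ x) (h2 : x ≤ 1) :
    Real.exp x ≤ 1 + x + x^2/2 + x^3/6 + 5*x^4/96 := by
  have := Real.exp_bound' h1 h2 (n := 4) (by norm_num)
  simp [Finset.sum_range_succ, Nat.factorial] at this
  nlinarith [this]

private lemma exp_lower3 {x : ℝ} (h1 : 0 ≤ x) :
    1 + x + x^2/2 + x^3/6 ≤ Real.exp x := by
  have := Real.sum_le_exp_of_nonneg h1 4
  simp [Finset.sum_range_succ, Nat.factorial] at this
  nlinarith [this]

private lemma exp_lower4 {x : ℝ} (h1 : 0 ≤ x) :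
    1 + x + x^2/2 + x^3/6 + x^4/24 ≤ Real.exp x := by
  have := Real.sum_le_exp_of_nonneg h1 5
  simp [Finset.sum_range_succ, Nat.factorial] at this
  nlinarith [this]

private lemma log_three_halves_lt : Real.log (3/2) < 0.4055 := by
  rw [Real.log_lt_iff_lt_exp (by norm_num)]
  have := Real.sum_le_exp_of_nonneg (x := 0.4055) (by norm_num) 6
  simp [Finset.sum_range_succ, Nat.factorial] at this
  nlinarith [this]

private lemma log_three_halves_gt : 0.4054 < Real.log (3/2) := by
  rw [Real.lt_log_iff_exp_lt (by norm_num)]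
  have := Real.exp_bound' (x := 0.4054) (by norm_num) (by norm_num) (n := 5) (by norm_num)
  simp [Finset.sum_range_succ, Nat.factorial] at this
  nlinarith [this]

private lemma poly_ineq {s : ℝ} (hs : 0 < s) (hs' : s ≤ 3/2) :
    1 + 1.5*(1 + 0.4055*s + (0.4055*s)^2/2 + (0.4055*s)^3/6 + 5*(0.4055*s)^4/96)^2
      - (1 + 0.6931*s + (0.6931*s)^2/2 + (0.6931*s)^3/6 + (0.6931*s)^4/24)
      - 1.5*(1 + 0.4054*s + (0.4054*s)^2/2 + (0.4054*s)^3/6) - s^2/4 < 0 := by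
  nlinarith [mul_pos hs hs, pow_pos hs 3, mul_nonneg (mul_nonneg hs.le hs.le) (sub_nonneg.2 hs'),
    mul_nonneg (mul_nonneg (mul_nonneg hs.le hs.le) hs.le) (sub_nonneg.2 hs'),
    mul_nonneg (mul_nonneg (mul_nonneg (mul_nonneg hs.le hs.le) hs.le) hs.le) (sub_nonneg.2 hs'),
    pow_pos hs 4, pow_pos hs 5]

set_option maxHeartbeats 1000000 in
/-- The key value inequality at `x = 1/2`. -/
private lemma key_half (α : ℝ) (hα : α ∈ Set.Ioo (1 : ℝ) 4) :
    1 + (3/2 : ℝ) ^ α - (1/2 : ℝ) ^ ((1 - α) / 2) - (3/2 : ℝ) ^ ((1 + α) / 2) <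
      (α - 1) ^ 2 / 4 * (1/2 : ℝ) ^ 2 := by
  obtain ⟨h1, h4⟩ := hα
  set s : ℝ := (α - 1) / 2 with hs_def
  have hs : 0 < s := by simp [hs_def]; linarith
  have hs' : s ≤ 3/2 := by simp [hs_def]; linarith
  set c : ℝ := Real.log (3/2) with hc_def
  set d : ℝ := Real.log 2 with hd_def
  have hc1 : 0.4054 < c := log_three_halves_gt
  have hc2 : c < 0.4055 := log_three_halves_lt
  have hd1 : (0.6931 : ℝ) < d := by
    have := Real.log_two_gt_d9; rw [hd_def]; linarith
  set a : ℝ := Real.exp (s * c) with ha_def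
  set v : ℝ := Real.exp (s * d) with hv_def
  -- rewrite all rpow values in terms of a and v
  have e1 : (3/2 : ℝ) ^ α = (3/2) * a^2 := by
    rw [Real.rpow_def_of_pos (by norm_num),
      show Real.log (3/2) * α = s * c + s * c + c by rw [hs_def, hc_def]; ring,
      Real.exp_add, Real.exp_add, Real.exp_log (by norm_num : (0:ℝ) < 3/2)]
    rw [ha_def]; ring
  have e2 : (1/2 : ℝ) ^ ((1 - α) / 2) = v := by
    rw [Real.rpow_def_of_pos (by norm_num), hv_def]
    congr 1
    rw [show Real.log (1/2 : ℝ) = -Real.log 2 by rw [one_div, Real.log_inv],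
      hd_def, hs_def]
    ring
  have e3 : (3/2 : ℝ) ^ ((1 + α) / 2) = (3/2) * a := by
    rw [Real.rpow_def_of_pos (by norm_num),
      show Real.log (3/2) * ((1 + α)/2) = s * c + c by rw [hs_def, hc_def]; ring,
      Real.exp_add, Real.exp_log (by norm_num : (0:ℝ) < 3/2)]
    rw [ha_def]; ring
  rw [e1, e2, e3]
  -- bounds on a and v
  have hsc_le : s * c ≤ 0.4055 * s := by nlinarith
  have hsc_ge : 0.4054 * s ≤ s * c := by nlinarith
  have hsd_ge : 0.6931 * s ≤ s * d := by nlinarith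
  have ha_up : a ≤ 1 + 0.4055*s + (0.4055*s)^2/2 + (0.4055*s)^3/6 + 5*(0.4055*s)^4/96 := by
    calc a ≤ Real.exp (0.4055 * s) := Real.exp_le_exp.2 hsc_le
    _ ≤ _ := exp_upper (by positivity) (by nlinarith)
  have ha_lo : 1 + 0.4054*s + (0.4054*s)^2/2 + (0.4054*s)^3/6 ≤ a := by
    calc (1:ℝ) + 0.4054*s + (0.4054*s)^2/2 + (0.4054*s)^3/6
        ≤ Real.exp (0.4054 * s) := exp_lower3 (by positivity)
    _ ≤ a := Real.exp_le_exp.2 hsc_ge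
  have hv_lo : 1 + 0.6931*s + (0.6931*s)^2/2 + (0.6931*s)^3/6 + (0.6931*s)^4/24 ≤ v := by
    calc (1:ℝ) + 0.6931*s + (0.6931*s)^2/2 + (0.6931*s)^3/6 + (0.6931*s)^4/24
        ≤ Real.exp (0.6931 * s) := exp_lower4 (by positivity)
    _ ≤ v := Real.exp_le_exp.2 hsd_ge
  have ha_pos : 0 < a := Real.exp_pos _
  have ha2 : a^2 ≤ (1 + 0.4055*s + (0.4055*s)^2/2 + (0.4055*s)^3/6 + 5*(0.4055*s)^4/96)^2 :=
    pow_le_pow_left₀ ha_pos.le ha_up 2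
  have hq : (α - 1) ^ 2 / 4 * (1/2 : ℝ) ^ 2 = s^2/4 := by rw [hs_def]; ring
  rw [hq]
  have hp := poly_ineq hs hs'
  linarith [ha2, ha_lo, hv_lo, hp]

/-- Lemma 5.2: failure of the super-solution lower bound for `α ∈ (1,4)`. -/
theorem g_lower_bound_fails_mid_alpha (α : ℝ) (hα : α ∈ Set.Ioo (1 : ℝ) 4) :
    ∃ ε > (0 : ℝ), ∀ x ∈ Set.Ioo (1 / 2 - ε : ℝ) (1 / 2),
      1 + (1 + x) ^ α - (1 - x) ^ ((1 - α) / 2) - (1 + x) ^ ((1 + α) / 2) <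
        (α - 1) ^ 2 / 4 * x ^ 2 := by
  set f : ℝ → ℝ := fun x =>
    1 + (1 + x) ^ α - (1 - x) ^ ((1 - α) / 2) - (1 + x) ^ ((1 + α) / 2) -
      (α - 1) ^ 2 / 4 * x ^ 2 with hf_def
  have hcont : ContinuousAt f (1/2 : ℝ) := by
    apply ContinuousAt.sub
    apply ContinuousAt.sub
    apply ContinuousAt.sub
    · exact continuousAt_const.add
        (((continuousAt_const.add continuousAt_id).rpow_const (Or.inl (by norm_num))))
    · exact (continuousAt_const.sub continuousAt_id).rpow_const (Or.inl (by norm_num))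
    · exact (continuousAt_const.add continuousAt_id).rpow_const (Or.inl (by norm_num))
    · exact continuousAt_const.mul ((continuousAt_id).pow 2)
  have hneg : f (1/2) < 0 := by
    have h := key_half α hα
    simp only [hf_def]
    norm_num at h ⊢
    linarith
  have hmem : f ⁻¹' (Set.Iio 0) ∈ nhds (1/2 : ℝ) := hcont (Iio_mem_nhds hneg)
  obtain ⟨ε, hε, hball⟩ := Metric.mem_nhds_iff.1 hmem
  refine ⟨ε, hε, fun x hx => ?_⟩
  have hxball : x ∈ Metric.ball (1/2 : ℝ) ε := by
    rw [Real.ball_eq_Ioo]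
    exact ⟨hx.1, lt_trans hx.2 (by linarith)⟩
  have hfx := hball hxball
  simp only [Set.mem_preimage, Set.mem_Iio, hf_def] at hfx
  linarith
end

section
/- For all α ∈ [0, 1): b_6(α) := binom(α, 6) − binom((1−α)/2, 6) − binom((1+α)/2, 6) satisfies b_6(α) = (1/23040)(1−α)(9−α)(31α⁴ − 170α³ + 536α² − 310α + 105), and in particular b_6(α) ≥ 0. -/
/-- Identity (4.9) and the non-negativity of `b₆` on `[0,1)`. -/
theorem b6_formula_and_nonneg (α : ℝ) (hα : α ∈ Set.Ico (0 : ℝ) 1) :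
    genBinom α 6 - genBinom ((1 - α) / 2) 6 - genBinom ((1 + α) / 2) 6 =
      (1 / 23040) * (1 - α) * (9 - α) *
        (31 * α ^ 4 - 170 * α ^ 3 + 536 * α ^ 2 - 310 * α + 105) ∧
    0 ≤ genBinom α 6 - genBinom ((1 - α) / 2) 6 - genBinom ((1 + α) / 2) 6 := by
  obtain ⟨h0, h1⟩ := hα
  have hid : genBinom α 6 - genBinom ((1 - α) / 2) 6 - genBinom ((1 + α) / 2) 6 =
      (1 / 23040) * (1 - α) * (9 - α) *
        (31 * α ^ 4 - 170 * α ^ 3 + 536 * α ^ 2 - 310 * α + 105) := by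
    simp only [genBinom, Finset.prod_range_succ, Finset.prod_range_zero]
    norm_num [Nat.factorial]
    ring
  refine ⟨hid, ?_⟩
  rw [hid]
  have hq : 0 ≤ 31 * α ^ 4 - 170 * α ^ 3 + 536 * α ^ 2 - 310 * α + 105 := by
    nlinarith [sq_nonneg α, sq_nonneg (α - 1), sq_nonneg (α^2 - α), sq_nonneg (α^2 - 3*α + 1), sq_nonneg (1 - α)]
  have : (0:ℝ) ≤ 1 - α := by linarith
  have : (0:ℝ) ≤ 9 - α := by linarith
  positivity
end

section
/- Let α ∈ (0, 1/3]. Then for all x ∈ (0, 1): 2 · √( ((1+α)²(9−α²)(25−α²)/256) · (1+x)^{(α−7)/2} · (1−x)^{(−7−α)/2} ) ≥ α(2−α)(3−α)(1+x)^{α−4}. -/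
/-- Inequality (4.11) from the proof of Lemma 4.2. -/
theorem ineq_4_11 (α : ℝ) (hα : α ∈ Set.Ioc (0 : ℝ) (1 / 3))
    (x : ℝ) (hx : x ∈ Set.Ioo (0 : ℝ) 1) :
    2 * Real.sqrt ((1 + α) ^ 2 * (9 - α ^ 2) * (25 - α ^ 2) / 256 *
        (1 + x) ^ ((α - 7) / 2) * (1 - x) ^ ((-7 - α) / 2)) ≥
      α * (2 - α) * (3 - α) * (1 + x) ^ (α - 4) := by
  obtain ⟨hα0, hα1⟩ := hα
  obtain ⟨hx0, hx1⟩ := hx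
  have h1x : (1 : ℝ) ≤ 1 + x := by linarith
  have h1x0 : (0 : ℝ) < 1 + x := by linarith
  have hmx0 : (0 : ℝ) < 1 - x := by linarith
  -- positive RHS
  have hK : (0 : ℝ) < α * (2 - α) * (3 - α) := by
    have : (0:ℝ) < 2 - α := by linarith
    have : (0:ℝ) < 3 - α := by linarith
    positivity
  have hP : (0 : ℝ) < (1 + x) ^ (α - 4) := Real.rpow_pos_of_pos h1x0 _
  have hB : (0 : ℝ) < α * (2 - α) * (3 - α) * (1 + x) ^ (α - 4) := mul_pos hK hP
  have h2 : ∀ A : ℝ, 2 * Real.sqrt A = Real.sqrt (4 * A) := fun A => by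
    rw [Real.sqrt_mul (by norm_num), show Real.sqrt 4 = 2 by
      rw [show (4:ℝ) = 2 ^ 2 by norm_num, Real.sqrt_sq (by norm_num)]]
  rw [ge_iff_le, h2, Real.le_sqrt' hB]
  -- reduce to a product of three comparisons
  have key : (α * (2 - α) * (3 - α)) ^ 2 ≤
      4 * ((1 + α) ^ 2 * (9 - α ^ 2) * (25 - α ^ 2) / 256) := by
    nlinarith [sq_nonneg α, sq_nonneg (1 - 3*α), sq_nonneg (α*(1-3*α)),
      sq_nonneg (α^2*(1-3*α)), sq_nonneg (α^3), mul_pos hα0 hα0]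
  have hpow : ((1 + x) ^ (α - 4)) ^ 2 = (1 + x) ^ (2 * (α - 4)) := by
    rw [← Real.rpow_natCast ((1 + x) ^ (α - 4)) 2, ← Real.rpow_mul h1x0.le]
    norm_num [mul_comm]
  have hexp : (1 + x) ^ (2 * (α - 4)) ≤ (1 + x) ^ ((α - 7) / 2) :=
    Real.rpow_le_rpow_of_exponent_le h1x (by linarith)
  have hone : (1 : ℝ) ≤ (1 - x) ^ ((-7 - α) / 2) :=
    Real.one_le_rpow_of_pos_of_le_one_of_nonpos hmx0 (by linarith) (by linarith)
  have hC : (0 : ℝ) < (1 + α) ^ 2 * (9 - α ^ 2) * (25 - α ^ 2) / 256 := by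
    have h9 : (0:ℝ) < 9 - α ^ 2 := by nlinarith
    have h25 : (0:ℝ) < 25 - α ^ 2 := by nlinarith
    positivity
  calc (α * (2 - α) * (3 - α) * (1 + x) ^ (α - 4)) ^ 2
      = (α * (2 - α) * (3 - α)) ^ 2 * (1 + x) ^ (2 * (α - 4)) := by
        rw [mul_pow, hpow]
    _ ≤ 4 * ((1 + α) ^ 2 * (9 - α ^ 2) * (25 - α ^ 2) / 256) *
          (1 + x) ^ ((α - 7) / 2) := by
        apply mul_le_mul key hexp (Real.rpow_pos_of_pos h1x0 _).le (by positivity)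
    _ ≤ 4 * ((1 + α) ^ 2 * (9 - α ^ 2) * (25 - α ^ 2) / 256 *
          (1 + x) ^ ((α - 7) / 2) * (1 - x) ^ ((-7 - α) / 2)) := by
        have hpos : (0:ℝ) < (1 + α) ^ 2 * (9 - α ^ 2) * (25 - α ^ 2) / 256 *
            (1 + x) ^ ((α - 7) / 2) := mul_pos hC (Real.rpow_pos_of_pos h1x0 _)
        nlinarith [mul_le_mul_of_nonneg_left hone hpos.le]
end

section
/- For all x ∈ (0, 1/2]: (7/4)(1+x)³ (log(1+x))³ + (log(1−x))³ ≥ 0. -/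
open Real Finset

private lemma log_taylor_bound (x : ℝ) (h : |x| < 1) :
    |(x + x^2/2 + x^3/3 + x^4/4 + x^5/5 + x^6/6 + x^7/7 + x^8/8) + Real.log (1 - x)|
      ≤ |x| ^ 9 / (1 - |x|) := by
  have := Real.abs_log_sub_add_sum_range_le h 8
  simp [Finset.sum_range_succ] at this
  convert this using 3
  ring

private lemma pow_succ_half {x : ℝ} (hx0 : 0 < x) (hx2 : x ≤ 1/2) (n : ℕ) :
    x ^ (n + 1) ≤ x ^ n / 2 := by
  have h1 : x ^ (n+1) = x ^ n * x := by ring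
  have h2 : x ^ n * x ≤ x ^ n * (1/2) :=
    mul_le_mul_of_nonneg_left (by linarith) (pow_nonneg hx0.le n)
  rw [h1]; linarith

set_option maxHeartbeats 1000000 in
/-- Non-negativity of `E₃(x) = (7/4)(1+x)³ log³(1+x) + log³(1−x)` on `(0, 1/2]`
(from the proof of Lemma 4.5). -/
theorem E3_nonneg (x : ℝ) (hx : x ∈ Set.Ioc (0 : ℝ) (1 / 2)) :
    7 / 4 * (1 + x) ^ 3 * Real.log (1 + x) ^ 3 + Real.log (1 - x) ^ 3 ≥ 0 := by
  obtain ⟨hx0, hx2⟩ := hx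
  have hx1 : |x| < 1 := by rw [abs_of_pos hx0]; linarith
  have hxn : |(-x)| < 1 := by rwa [abs_neg]
  have h1 := log_taylor_bound x hx1
  have h2 := log_taylor_bound (-x) hxn
  rw [abs_of_pos hx0] at h1
  rw [abs_neg, abs_of_pos hx0] at h2
  have herr : x ^ 9 / (1 - x) ≤ 2 * x ^ 9 := by
    rw [div_le_iff₀ (by linarith)]
    nlinarith [pow_pos hx0 9]
  rw [abs_le] at h1 h2
  have hp2 := pow_succ_half hx0 hx2 1
  have hp3 := pow_succ_half hx0 hx2 2
  have hp4 := pow_succ_half hx0 hx2 3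
  have hp5 := pow_succ_half hx0 hx2 4
  have hp6 := pow_succ_half hx0 hx2 5
  have hp7 := pow_succ_half hx0 hx2 6
  have hp8 := pow_succ_half hx0 hx2 7
  have hp9 := pow_succ_half hx0 hx2 8
  have hp10 := pow_succ_half hx0 hx2 9
  have hxp : ∀ n, 0 ≤ x ^ n := fun n => pow_nonneg hx0.le n
  -- Upper bound for -log(1-x)
  have hB : -Real.log (1 - x) ≤ x + x^2/2 + x^3/3 + x^4/4 + x^5/5 + x^6/6 + x^7/7 + x^8/8
      + 2 * x ^ 9 := by linarith [h1.2]
  -- Lower bound for log(1+x)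
  have hA : Real.log (1 + x) ≥ x - x^2/2 + x^3/3 - x^4/4 + x^5/5 - x^6/6 + x^7/7 - x^8/8
      - 2 * x ^ 9 := by
    have h1x : (1 : ℝ) - -x = 1 + x := by ring
    rw [h1x] at h2
    nlinarith [h2.1]
  set L := Real.log (1 + x) with hL
  set M := Real.log (1 - x) with hM
  have hMneg : M ≤ 0 := Real.log_nonpos (by linarith) (by linarith)
  set P : ℝ := (1 + x) * (x - x^2/2 + x^3/3 - x^4/4 + x^5/5 - x^6/6 + x^7/7 - x^8/8 - 2 * x ^ 9)
    with hP
  set Q : ℝ := x + x^2/2 + x^3/3 + x^4/4 + x^5/5 + x^6/6 + x^7/7 + x^8/8 + 2 * x ^ 9 with hQ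
  have hQ0 : 0 ≤ Q := by
    rw [hQ]
    have := hxp 2; have := hxp 3; have := hxp 4; have := hxp 5; have := hxp 6
    have := hxp 7; have := hxp 8; have := hxp 9
    linarith [hx0.le]
  have hPQ : P ≥ (83/100) * Q := by
    rw [hP, hQ]
    linarith [hp2, hp3, hp4, hp5, hp6, hp7, hp8, hp9, hp10, hx0.le]
  have hAL : (1 + x) * L ≥ P := by
    have h1x : (0:ℝ) < 1 + x := by linarith
    rw [hP]
    exact mul_le_mul_of_nonneg_left hA (le_of_lt h1x)
  have hBQ : -M ≤ Q := hB
  clear hA hB h1 h2 hp2 hp3 hp4 hp5 hp6 hp7 hp8 hp9 hp10 herr hxp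
  clear hP hQ
  clear_value P Q
  have hQ83 : 0 ≤ (83/100) * Q := by linarith
  have hP0 : 0 ≤ P := le_trans hQ83 hPQ
  have hcube : ((83/100) * Q)^3 ≤ P^3 := pow_le_pow_left₀ hQ83 hPQ 3
  have key : 7/4 * P^3 - Q^3 ≥ 0 := by nlinarith [hcube, pow_nonneg hQ0 3]
  have hALnn : 0 ≤ (1 + x) * L := le_trans hP0 hAL
  have hAL3 : ((1+x)*L)^3 ≥ P^3 := pow_le_pow_left₀ hP0 hAL 3
  have hM3 : M^3 ≥ -Q^3 := by
    have hnM : (-M)^3 ≤ Q^3 := pow_le_pow_left₀ (by linarith) hBQ 3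
    nlinarith [hnM]
  have expand : 7/4 * (1+x)^3 * L^3 = 7/4 * ((1+x)*L)^3 := by ring
  rw [expand]
  linarith [hAL3, hM3, key]
end
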